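/- arXiv:0906.0476 — 3 statements merged into one kernel-verified Lean document; each statement's English description precedes it below -/
import Mathlib

section
/- Let (X,d) be a proper geodesic metric space, L : [0,∞) → [0,∞) increasing, convex, superlinear with L(0)=0, and g : X → ℝ Lipschitz. Then the Hopf–Lax semigroup satisfies the semigroup property: for all 0 ≤ s < t and all x ∈ X, Q_t g(x) = min_{y ∈ X} [ (t−s)·L(d(x,y)/(t−s)) + Q_s g(y) ], where Q_0 g = g. -/
/-!
The cost `t * L (r / t)` is the perspective of the convex function `L`, hence subadditive in
`(t, r)`; with the triangle inequality and monotonicity of `L` this gives `Q_t ≤ Q_{t-s} ∘ Q_s`.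
Conversely, if `z` minimizes the formula for `Q_t g x` (it exists since `L` is superlinear and
closed balls are compact), the point `y` on a geodesic from `x` to `z` with
`d(x,y) = (t-s)/t · d(x,z)` splits the cost of `z` exactly, as both pieces move at speed
`d(x,z)/t`.
-/

open Metric Filter NNReal

/-- Hopf–Lax (infimum-convolution) semigroup, with `Q_0 g = g`. -/
noncomputable def hopfLaxQ {X : Type*} [MetricSpace X] (L : ℝ → ℝ) (g : X → ℝ)
    (t : ℝ) (x : X) : ℝ :=
  if t = 0 then g x else ⨅ y : X, (t * L (dist x y / t) + g y)

open Set Topology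

theorem ConvexOn.continuousOn_Ici_of_monotoneOn {L : ℝ → ℝ} {a : ℝ}
    (hconv : ConvexOn ℝ (Ici a) L) (hmono : MonotoneOn L (Ici a)) :
    ContinuousOn L (Ici a) := by
  intro u hu
  rcases (mem_Ici.1 hu).eq_or_lt with rfl | hau
  · have hchord : ∀ v ∈ Icc a (a + 1), L v ≤ L a + (v - a) * (L (a + 1) - L a) := by
      rintro v ⟨hv₀, hv₁⟩
      have h := hconv.2 (self_mem_Ici : a ∈ Ici a) (show a + 1 ∈ Ici a by simp)
        (show 0 ≤ 1 - (v - a) by linarith) (show 0 ≤ v - a by linarith) (by ring)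
      rw [smul_eq_mul, smul_eq_mul, smul_eq_mul, smul_eq_mul,
        show (1 - (v - a)) * a + (v - a) * (a + 1) = v by ring] at h
      linarith
    have hlim : Tendsto (fun v => L a + (v - a) * (L (a + 1) - L a)) (𝓝[≥] a) (𝓝 (L a)) := by
      have hc : Continuous fun v => L a + (v - a) * (L (a + 1) - L a) := by fun_prop
      simpa using (hc.tendsto a).mono_left nhdsWithin_le_nhds
    refine tendsto_of_tendsto_of_tendsto_of_le_of_le' tendsto_const_nhds hlim ?_ ?_
    · filter_upwards [self_mem_nhdsWithin] with v hv
      exact hmono self_mem_Ici hv hv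
    · filter_upwards [Icc_mem_nhdsGE (lt_add_one a)] with v hv
      exact hchord v hv
  · exact ((hconv.subset Ioi_subset_Ici_self (convex_Ioi a)).continuousOn isOpen_Ioi
      |>.continuousAt (Ioi_mem_nhds hau)).continuousWithinAt

theorem ConvexOn.perspective_add_le {L : ℝ → ℝ} (hconv : ConvexOn ℝ (Ici 0) L)
    {a b p q : ℝ} (ha : 0 ≤ a) (hb : 0 ≤ b) (hp : 0 < p) (hq : 0 < q) :
    (p + q) * L ((a + b) / (p + q)) ≤ p * L (a / p) + q * L (b / q) := by
  have hpq : 0 < p + q := add_pos hp hq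
  have h := hconv.2 (mem_Ici.2 (div_nonneg ha hp.le)) (mem_Ici.2 (div_nonneg hb hq.le))
    (div_nonneg hp.le hpq.le) (div_nonneg hq.le hpq.le) (by field_simp)
  have hcomb : (p / (p + q)) • (a / p) + (q / (p + q)) • (b / q) = (a + b) / (p + q) := by
    simp only [smul_eq_mul]
    field_simp
  rw [hcomb, smul_eq_mul, smul_eq_mul] at h
  calc (p + q) * L ((a + b) / (p + q))
      ≤ (p + q) * (p / (p + q) * L (a / p) + q / (p + q) * L (b / q)) :=
        mul_le_mul_of_nonneg_left h hpq.le
    _ = p * L (a / p) + q * L (b / q) := by field_simp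

theorem eventually_mul_le_mul_div_of_superlinear {L : ℝ → ℝ}
    (hsuper : Tendsto (fun u => L u / u) atTop atTop) {t : ℝ} (ht : 0 < t) (K : ℝ) :
    ∀ᶠ r in atTop, K * r ≤ t * L (r / t) := by
  have hdiv : Tendsto (fun r => r / t) atTop atTop := tendsto_id.atTop_div_const ht
  filter_upwards [(hsuper.comp hdiv).eventually_ge_atTop K, hdiv.eventually_gt_atTop 0]
    with r hK hr
  have hKL : K * (r / t) ≤ L (r / t) := (le_div_iff₀ hr).1 hK
  calc K * r = t * (K * (r / t)) := by field_simp
    _ ≤ t * L (r / t) := mul_le_mul_of_nonneg_left hKL ht.le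

section HopfLax

variable {X : Type*} [MetricSpace X] {L : ℝ → ℝ} {g : X → ℝ}

theorem isLeast_hopfLaxQ [ProperSpace X] (hL0 : L 0 = 0) (hLmono : MonotoneOn L (Ici 0))
    (hLconv : ConvexOn ℝ (Ici 0) L) (hLsuper : Tendsto (fun u => L u / u) atTop atTop)
    {K : ℝ≥0} (hg : LipschitzWith K g) {t : ℝ} (ht : 0 < t) (x : X) :
    IsLeast (range fun y => t * L (dist x y / t) + g y) (hopfLaxQ L g t x) := by
  set F : X → ℝ := fun y => t * L (dist x y / t) + g y
  have hF : Continuous F :=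
    (continuous_const.mul ((hLconv.continuousOn_Ici_of_monotoneOn hLmono).comp_continuous
      (by fun_prop) fun y => mem_Ici.2 (by positivity))).add hg.continuous
  have hcoercive : ∀ᶠ y in cocompact X, F x ≤ F y := by
    filter_upwards [(tendsto_dist_left_cocompact_atTop x).eventually
      (eventually_mul_le_mul_div_of_superlinear hLsuper ht K)] with y hy
    have hgxy := hg.le_add_mul x y
    simp only [F, dist_self, zero_div, hL0, mul_zero, zero_add]
    linarith
  obtain ⟨z, hz⟩ := hF.exists_forall_le' x hcoercive
  have hmin : IsLeast (range F) (F z) := ⟨mem_range_self z, forall_mem_range.2 hz⟩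
  have hQ : (⨅ y, F y) = F z := hmin.csInf_eq
  rwa [hopfLaxQ, if_neg ht.ne', hQ]

theorem hopfLaxQ_le_add [ProperSpace X] (hL0 : L 0 = 0) (hLmono : MonotoneOn L (Ici 0))
    (hLconv : ConvexOn ℝ (Ici 0) L) (hLsuper : Tendsto (fun u => L u / u) atTop atTop)
    {K : ℝ≥0} (hg : LipschitzWith K g) {s t : ℝ} (hs : 0 ≤ s) (hst : s < t) (x y : X) :
    hopfLaxQ L g t x ≤ (t - s) * L (dist x y / (t - s)) + hopfLaxQ L g s y := by
  have ht : 0 < t := hs.trans_lt hst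
  have hQt := isLeast_hopfLaxQ hL0 hLmono hLconv hLsuper hg ht x
  rcases hs.eq_or_lt with rfl | hs
  · simpa [hopfLaxQ] using hQt.2 (mem_range_self y)
  obtain ⟨z, hz⟩ := (isLeast_hopfLaxQ hL0 hLmono hLconv hLsuper hg hs y).1
  have hcost : t * L (dist x z / t) ≤ (t - s) * L (dist x y / (t - s)) + s * L (dist y z / s) :=
    calc t * L (dist x z / t) ≤ t * L ((dist x y + dist y z) / t) := by
          gcongr
          exact hLmono (mem_Ici.2 (by positivity)) (mem_Ici.2 (by positivity))
            (by gcongr; exact dist_triangle x y z)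
      _ = ((t - s) + s) * L ((dist x y + dist y z) / ((t - s) + s)) := by rw [sub_add_cancel]
      _ ≤ (t - s) * L (dist x y / (t - s)) + s * L (dist y z / s) :=
          hLconv.perspective_add_le dist_nonneg dist_nonneg (sub_pos.2 hst) hs
  calc hopfLaxQ L g t x ≤ t * L (dist x z / t) + g z := hQt.2 (mem_range_self z)
    _ ≤ (t - s) * L (dist x y / (t - s)) + (s * L (dist y z / s) + g z) := by linarith
    _ = (t - s) * L (dist x y / (t - s)) + hopfLaxQ L g s y := by rw [← hz]

theorem exists_add_hopfLaxQ_eq [ProperSpace X]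
    (hgeo : ∀ x y : X, ∀ τ : ℝ, 0 ≤ τ → τ ≤ 1 →
      ∃ z : X, dist x z = τ * dist x y ∧ dist z y = (1 - τ) * dist x y)
    (hL0 : L 0 = 0) (hLmono : MonotoneOn L (Ici 0))
    (hLconv : ConvexOn ℝ (Ici 0) L) (hLsuper : Tendsto (fun u => L u / u) atTop atTop)
    {K : ℝ≥0} (hg : LipschitzWith K g) {s t : ℝ} (hs : 0 ≤ s) (hst : s < t) (x : X) :
    ∃ y, (t - s) * L (dist x y / (t - s)) + hopfLaxQ L g s y = hopfLaxQ L g t x := by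
  have ht : 0 < t := hs.trans_lt hst
  obtain ⟨z, hz⟩ := (isLeast_hopfLaxQ hL0 hLmono hLconv hLsuper hg ht x).1
  rcases hs.eq_or_lt with rfl | hs
  · exact ⟨z, by simpa [hopfLaxQ] using hz⟩
  obtain ⟨y, hxy, hyz⟩ := hgeo x z ((t - s) / t) (div_nonneg (by linarith) ht.le)
    ((div_le_one ht).2 (by linarith))
  have hxy' : dist x y / (t - s) = dist x z / t := by
    rw [hxy]; field_simp [(sub_pos.2 hst).ne']
  have hyz' : dist y z / s = dist x z / t := by
    rw [hyz]; field_simp; ring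
  refine ⟨y, le_antisymm ?_ (hopfLaxQ_le_add hL0 hLmono hLconv hLsuper hg hs.le hst x y)⟩
  calc (t - s) * L (dist x y / (t - s)) + hopfLaxQ L g s y
      ≤ (t - s) * L (dist x y / (t - s)) + (s * L (dist y z / s) + g z) :=
        add_le_add_right ((isLeast_hopfLaxQ hL0 hLmono hLconv hLsuper hg hs y).2
          (mem_range_self z)) _
    _ = t * L (dist x z / t) + g z := by rw [hxy', hyz']; ring
    _ = hopfLaxQ L g t x := hz

end HopfLax

theorem hopfLax_semigroup_general
    {X : Type*} [MetricSpace X] [ProperSpace X]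
    (hgeo : ∀ x y : X, ∀ τ : ℝ, 0 ≤ τ → τ ≤ 1 →
      ∃ z : X, dist x z = τ * dist x y ∧ dist z y = (1 - τ) * dist x y)
    (L : ℝ → ℝ) (hL0 : L 0 = 0)
    (hLmono : MonotoneOn L (Set.Ici 0))
    (hLconv : ConvexOn ℝ (Set.Ici 0) L)
    (hLsuper : Tendsto (fun u => L u / u) atTop atTop)
    (g : X → ℝ) (hg : ∃ K : ℝ≥0, LipschitzWith K g)
    (s t : ℝ) (hs : 0 ≤ s) (hst : s < t) (x : X) :
    IsLeast (Set.range fun y : X => ((t - s) * L (dist x y / (t - s)) + hopfLaxQ L g s y))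
      (hopfLaxQ L g t x) := by
  obtain ⟨K, hg⟩ := hg
  exact ⟨exists_add_hopfLaxQ_eq hgeo hL0 hLmono hLconv hLsuper hg hs hst x,
    forall_mem_range.2 (hopfLaxQ_le_add hL0 hLmono hLconv hLsuper hg hs hst x)⟩

/-- Semigroup property of the Hopf–Lax formula: for `0 ≤ s < t`,
`Q_t g(x)` is the minimum over `y` of `(t-s)·L(d(x,y)/(t-s)) + Q_s g(y)`. -/
theorem hopfLax_semigroup
    {X : Type*} [MetricSpace X] [ProperSpace X] [Nonempty X]
    (hgeo : ∀ x y : X, ∀ τ : ℝ, 0 ≤ τ → τ ≤ 1 →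
      ∃ z : X, dist x z = τ * dist x y ∧ dist z y = (1 - τ) * dist x y)
    (L : ℝ → ℝ) (hL0 : L 0 = 0)
    (hLnonneg : ∀ u, 0 ≤ u → 0 ≤ L u)
    (hLmono : MonotoneOn L (Set.Ici 0))
    (hLconv : ConvexOn ℝ (Set.Ici 0) L)
    (hLsuper : Tendsto (fun u => L u / u) atTop atTop)
    (g : X → ℝ) (hg : ∃ K : ℝ≥0, LipschitzWith K g)
    (s t : ℝ) (hs : 0 ≤ s) (hst : s < t) (x : X) :
    IsLeast (Set.range fun y : X => ((t - s) * L (dist x y / (t - s)) + hopfLaxQ L g s y))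
      (hopfLaxQ L g t x) :=
  hopfLax_semigroup_general hgeo L hL0 hLmono hLconv hLsuper g hg s t hs hst x
end

section
/- Let (X,d) be a proper geodesic metric space, L : [0,∞) → [0,∞) increasing, convex, superlinear with L(0)=0, H(w) = sup_{v ≥ 0} (w·v − L(v)) its Legendre transform, and g : X → ℝ Lipschitz with Lipschitz constant lip(g). Then for every fixed x ∈ X and all s, t > 0, |Q_t g(x) − Q_s g(x)| ≤ H(lip(g))·|t − s|. -/
open Metric Filter NNReal

/-- The (one-dimensional) Legendre transform `H(w) = sup_{v ≥ 0} (w·v − L(v))`. -/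
noncomputable def legendreH (L : ℝ → ℝ) (w : ℝ) : ℝ :=
  sSup ((fun v => w * v - L v) '' Set.Ici 0)

/-! For `s ≤ t`, convexity of `L` with `L 0 = 0` makes `t ↦ t L(d/t)` antitone, so
`Q_t g ≤ Q_s g`. Conversely, for a competitor `y` of `Q_t g(x)`, the point `z` at fraction `s/t`
of a geodesic from `x` to `y` is a competitor of `Q_s g(x)` with the same speed
`w = d(x,y)/t`; the remaining distance `(t - s) w` changes `g` by at most `lip(g) (t - s) w`,
and `lip(g) w - L w ≤ H(lip g)`. Superlinearity keeps the infima and the supremum defining `H`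
finite. -/

theorem ConvexOn.map_smul_le_smul {𝕜 E β : Type*} [Ring 𝕜] [PartialOrder 𝕜]
    [IsOrderedRing 𝕜] [AddCommMonoid E] [AddCommMonoid β] [PartialOrder β]
    [Module 𝕜 E] [Module 𝕜 β] {s : Set E} {f : E → β} (hf : ConvexOn 𝕜 s f)
    (h0 : (0 : E) ∈ s) (hf0 : f 0 = 0) {x : E} (hx : x ∈ s) {a : 𝕜} (ha₀ : 0 ≤ a)
    (ha₁ : a ≤ 1) : f (a • x) ≤ a • f x := by
  simpa [hf0] using hf.2 hx h0 ha₀ (sub_nonneg.2 ha₁) (add_sub_cancel a 1)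

section Lagrangian

variable {L : ℝ → ℝ}

theorem exists_affine_le_of_tendsto_div_atTop (hLnonneg : ∀ u, 0 ≤ u → 0 ≤ L u)
    (hLsuper : Tendsto (fun u => L u / u) atTop atTop) (K : ℝ) :
    ∃ C, ∀ u, 0 ≤ u → K * u - C ≤ L u := by
  obtain ⟨u₀, hu₀⟩ := eventually_atTop.1 (hLsuper.eventually_ge_atTop K)
  refine ⟨|K| * max u₀ 1, fun u hu => ?_⟩
  rcases le_or_gt u (max u₀ 1) with hle | hlt
  · have : K * u ≤ |K| * max u₀ 1 :=
      (mul_le_mul_of_nonneg_right (le_abs_self K) hu).trans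
        (mul_le_mul_of_nonneg_left hle (abs_nonneg K))
    linarith [hLnonneg u hu]
  · have hupos : 0 < u := lt_of_lt_of_le one_pos ((le_max_right _ _).trans hlt.le)
    have : K * u ≤ L u := (le_div_iff₀ hupos).1 (hu₀ u ((le_max_left _ _).trans hlt.le))
    nlinarith [abs_nonneg K, le_max_right u₀ 1]

theorem le_legendreH (hLnonneg : ∀ u, 0 ≤ u → 0 ≤ L u)
    (hLsuper : Tendsto (fun u => L u / u) atTop atTop) (w : ℝ) {v : ℝ} (hv : 0 ≤ v) :
    w * v - L v ≤ legendreH L w := by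
  obtain ⟨C, hC⟩ := exists_affine_le_of_tendsto_div_atTop hLnonneg hLsuper w
  refine le_csSup ⟨C, ?_⟩ ⟨v, hv, rfl⟩
  rintro _ ⟨u, hu, rfl⟩
  linarith [hC u hu]

theorem mul_map_div_le_mul_map_div (hL0 : L 0 = 0) (hLconv : ConvexOn ℝ (Set.Ici 0) L)
    {d s t : ℝ} (hd : 0 ≤ d) (hs : 0 < s) (hst : s ≤ t) :
    t * L (d / t) ≤ s * L (d / s) := by
  have ht : 0 < t := hs.trans_le hst
  have hscale : L (d / t) ≤ s / t * L (d / s) := by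
    have := hLconv.map_smul_le_smul Set.self_mem_Ici hL0 (x := d / s) (div_nonneg hd hs.le)
      (div_nonneg hs.le ht.le) ((div_le_one ht).2 hst)
    rwa [smul_eq_mul, smul_eq_mul, div_mul_div_cancel₀' hs.ne'] at this
  calc t * L (d / t) ≤ t * (s / t * L (d / s)) := mul_le_mul_of_nonneg_left hscale ht.le
    _ = s * L (d / s) := by field_simp

end Lagrangian

section HopfLax

variable {X : Type*} [MetricSpace X] {L : ℝ → ℝ} {g : X → ℝ} {Kg : ℝ≥0} {x : X} {s t : ℝ}

theorem hopfLaxQ_of_ne_zero (ht : t ≠ 0) :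
    hopfLaxQ L g t x = ⨅ y : X, (t * L (dist x y / t) + g y) :=
  if_neg ht

theorem bddBelow_range_hopfLax (hLnonneg : ∀ u, 0 ≤ u → 0 ≤ L u)
    (hLsuper : Tendsto (fun u => L u / u) atTop atTop) (hg : LipschitzWith Kg g)
    (ht : 0 < t) : BddBelow (Set.range fun y : X => t * L (dist x y / t) + g y) := by
  obtain ⟨C, hC⟩ := exists_affine_le_of_tendsto_div_atTop hLnonneg hLsuper Kg
  refine ⟨g x - t * C, ?_⟩
  rintro _ ⟨y, rfl⟩
  have hL : t * (Kg * (dist x y / t) - C) ≤ t * L (dist x y / t) :=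
    mul_le_mul_of_nonneg_left (hC _ (div_nonneg dist_nonneg ht.le)) ht.le
  have hcancel : t * (Kg * (dist x y / t)) = Kg * dist x y := by field_simp
  linarith [hg.le_add_mul x y]

theorem hopfLaxQ_le_of_le (hL0 : L 0 = 0) (hLnonneg : ∀ u, 0 ≤ u → 0 ≤ L u)
    (hLconv : ConvexOn ℝ (Set.Ici 0) L) (hLsuper : Tendsto (fun u => L u / u) atTop atTop)
    (hg : LipschitzWith Kg g) (hs : 0 < s) (hst : s ≤ t) :
    hopfLaxQ L g t x ≤ hopfLaxQ L g s x := by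
  have ht := hs.trans_le hst
  rw [hopfLaxQ_of_ne_zero ht.ne', hopfLaxQ_of_ne_zero hs.ne']
  refine ciInf_mono (bddBelow_range_hopfLax hLnonneg hLsuper hg ht) fun y => ?_
  exact add_le_add_left (mul_map_div_le_mul_map_div hL0 hLconv dist_nonneg hs hst) _

theorem hopfLaxQ_sub_le [Nonempty X]
    (hgeo : ∀ x y : X, ∀ τ : ℝ, 0 ≤ τ → τ ≤ 1 →
      ∃ z : X, dist x z = τ * dist x y ∧ dist z y = (1 - τ) * dist x y)
    (hLnonneg : ∀ u, 0 ≤ u → 0 ≤ L u) (hLsuper : Tendsto (fun u => L u / u) atTop atTop)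
    (hg : LipschitzWith Kg g) (hs : 0 < s) (hst : s ≤ t) :
    hopfLaxQ L g s x - legendreH L Kg * (t - s) ≤ hopfLaxQ L g t x := by
  have ht := hs.trans_le hst
  rw [hopfLaxQ_of_ne_zero ht.ne', hopfLaxQ_of_ne_zero hs.ne']
  refine le_ciInf fun y => ?_
  set w := dist x y / t with hw
  obtain ⟨z, hxz, hzy⟩ := hgeo x y (s / t) (div_nonneg hs.le ht.le) ((div_le_one ht).2 hst)
  have hxz' : dist x z / s = w := by rw [hxz, hw]; field_simp
  have hzy' : dist z y = (t - s) * w := by rw [hzy, hw]; field_simp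
  have hQs : (⨅ y : X, (s * L (dist x y / s) + g y)) ≤ s * L w + g z := by
    simpa only [hxz'] using ciInf_le (bddBelow_range_hopfLax (x := x) hLnonneg hLsuper hg hs) z
  have hH : (t - s) * (Kg * w - L w) ≤ (t - s) * legendreH L Kg :=
    mul_le_mul_of_nonneg_left (le_legendreH hLnonneg hLsuper Kg (by positivity))
      (sub_nonneg.2 hst)
  have hgz := hg.le_add_mul z y
  rw [hzy'] at hgz
  linarith

end HopfLax

theorem hopfLax_lipschitz_time_general
    {X : Type*} [MetricSpace X] [Nonempty X]
    (hgeo : ∀ x y : X, ∀ τ : ℝ, 0 ≤ τ → τ ≤ 1 →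
      ∃ z : X, dist x z = τ * dist x y ∧ dist z y = (1 - τ) * dist x y)
    (L : ℝ → ℝ) (hL0 : L 0 = 0)
    (hLnonneg : ∀ u, 0 ≤ u → 0 ≤ L u)
    (hLconv : ConvexOn ℝ (Set.Ici 0) L)
    (hLsuper : Tendsto (fun u => L u / u) atTop atTop)
    (g : X → ℝ) (Kg : ℝ≥0) (hg : LipschitzWith Kg g)
    (x : X) (s t : ℝ) (hs : 0 < s) (ht : 0 < t) :
    |hopfLaxQ L g t x - hopfLaxQ L g s x| ≤ legendreH L (Kg : ℝ) * |t - s| := by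
  wlog hst : s ≤ t generalizing s t
  · rw [abs_sub_comm, abs_sub_comm t]
    exact this t s ht hs (le_of_not_ge hst)
  have hanti := hopfLaxQ_le_of_le (x := x) hL0 hLnonneg hLconv hLsuper hg hs hst
  have hlower := hopfLaxQ_sub_le (x := x) hgeo hLnonneg hLsuper hg hs hst
  rw [abs_of_nonpos (sub_nonpos.2 hanti), abs_of_nonneg (sub_nonneg.2 hst)]
  linarith

/-- For fixed `x`, `t ↦ Q_t g(x)` is Lipschitz with constant `H(lip g)`. -/
theorem hopfLax_lipschitz_time
    {X : Type*} [MetricSpace X] [ProperSpace X] [Nonempty X]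
    (hgeo : ∀ x y : X, ∀ τ : ℝ, 0 ≤ τ → τ ≤ 1 →
      ∃ z : X, dist x z = τ * dist x y ∧ dist z y = (1 - τ) * dist x y)
    (L : ℝ → ℝ) (hL0 : L 0 = 0)
    (hLnonneg : ∀ u, 0 ≤ u → 0 ≤ L u)
    (hLmono : MonotoneOn L (Set.Ici 0))
    (hLconv : ConvexOn ℝ (Set.Ici 0) L)
    (hLsuper : Tendsto (fun u => L u / u) atTop atTop)
    (g : X → ℝ) (Kg : ℝ≥0) (hg : LipschitzWith Kg g)
    (x : X) (s t : ℝ) (hs : 0 < s) (ht : 0 < t) :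
    |hopfLaxQ L g t x - hopfLaxQ L g s x| ≤ legendreH L (Kg : ℝ) * |t - s| :=
  hopfLax_lipschitz_time_general hgeo L hL0 hLnonneg hLconv hLsuper g Kg hg x s t hs ht
end

section
/- Let (X,d) be a proper geodesic metric space with a Borel probability measure μ, let q > 2, p > 1 with 1/p + 1/q = 1, and consider the Hopf–Lax semigroup Q_t f(x) = inf_{y ∈ X}[ d(x,y)^p/(p·t^{p−1}) + f(y) ]. If there exist a, ρ > 0 such that for every bounded measurable f : X → ℝ and every t ≥ 0, (∫_X e^{(a+ρt)·Q_t f} dμ)^{1/(a+ρt)} ≤ (∫_X e^{a·f} dμ)^{1/a}, then every bounded continuous nonnegative function f : X → ℝ satisfies μ-esssup_X f ≤ ∫_X f dμ. In particular, the hypercontractivity of the Hopf–Lax semigroup fails for q > 2 whenever some bounded continuous nonnegative function has μ-essential supremum strictly larger than its μ-mean. -/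
open Metric Filter NNReal Topology MeasureTheory

/-- Hopf–Lax semigroup with Lagrangian `L(u) = u^p/p`:
`Q_t f(x) = inf_y [ d(x,y)^p/(p·t^{p−1}) + f(y) ]`, and `Q_0 f = f`. -/
noncomputable def hopfLaxP {X : Type*} [MetricSpace X] (p : ℝ) (f : X → ℝ)
    (t : ℝ) (x : X) : ℝ :=
  if t = 0 then f x else ⨅ y : X, (dist x y ^ p / (p * t ^ (p - 1)) + f y)

/-!
The Hopf–Lax semigroup commutes with the rescaling `f ↦ s f` once time is rescaled as well:
`Q_{T s^{1-q}} (s f) = s Q_T f`, because `(p - 1)(q - 1) = 1`. Fix `T > 0` and a level `m` with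
`α = μ {Q_T f > m} > 0`, and apply hypercontractivity to `s f` at time `T s^{1-q}`. Markov's
inequality bounds the left-hand side below by `α^{1/(a + ρ T s^{1-q})} e^{s m}`, and
`e^u ≤ 1 + u + u²` for `|u| ≤ 1` bounds the right-hand side above by `exp (s ∫ f + a s² M²)`.
Taking logarithms and dividing by `s` gives `m - ∫ f ≤ a M² s + (-log α) / (ρ T) · s^{q-2}`,
which tends to `0` as `s → 0` exactly because `q > 2`. Every `m` below the essential supremum
of a continuous `f` arises in this way, since `Q_T f(x) > m` for small `T` whenever `f(x) > m`.
-/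

open Set Real

lemma nonpos_of_eventually_le_mul_add_mul_rpow {x A B r : ℝ} (hr : 0 < r)
    (h : ∀ᶠ s in 𝓝[>] 0, x ≤ A * s + B * s ^ r) : x ≤ 0 := by
  have hcont : ContinuousAt (fun s : ℝ => A * s + B * s ^ r) 0 := by
    fun_prop (disch := exact Or.inr hr.le)
  refine ge_of_tendsto ?_ h
  simpa [Real.zero_rpow hr.ne'] using hcont.tendsto.mono_left nhdsWithin_le_nhds

section Measure

variable {α : Type*} [MeasurableSpace α] {μ : Measure α}

lemma measure_lt_ne_zero_of_lt_essSup {β : Type*} [ConditionallyCompleteLinearOrder β]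
    {f : α → β} {m : β} (hf : IsCoboundedUnder (· ≤ ·) (ae μ) f) (hm : m < essSup f μ) :
    μ {x | m < f x} ≠ 0 := by
  contrapose! hm
  refine essSup_le_of_ae_le m ?_ hf
  simpa [EventuallyLE, ae_iff] using hm

lemma measureReal_lt_mul_exp_le_integral_exp [IsFiniteMeasure μ] {g : α → ℝ} {c : ℝ}
    (hc : 0 ≤ c) (hg : Integrable (fun x => exp (c * g x)) μ) (m : ℝ) :
    μ.real {x | m < g x} * exp (c * m) ≤ ∫ x, exp (c * g x) ∂μ := by
  calc μ.real {x | m < g x} * exp (c * m)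
      ≤ exp (c * m) * μ.real {x | exp (c * m) ≤ exp (c * g x)} := by
        rw [mul_comm]
        refine mul_le_mul_of_nonneg_left (measureReal_mono fun x (hx : m < g x) => ?_)
          (exp_pos _).le
        exact exp_le_exp.2 (by gcongr)
    _ ≤ ∫ x, exp (c * g x) ∂μ :=
        mul_meas_ge_le_integral_of_nonneg (ae_of_all _ fun x => (exp_pos _).le) hg _

lemma integral_exp_mul_le [IsProbabilityMeasure μ] {f : α → ℝ} {M s : ℝ}
    (hf : AEStronglyMeasurable f μ) (hM : ∀ x, |f x| ≤ M) (hs : |s| * M ≤ 1) :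
    ∫ x, exp (s * f x) ∂μ ≤ exp (s * ∫ x, f x ∂μ + s ^ 2 * M ^ 2) := by
  have hfi : Integrable f μ := .of_bound hf M (ae_of_all _ hM)
  have hpoint : ∀ x, exp (s * f x) ≤ 1 + s * f x + s ^ 2 * M ^ 2 := fun x => by
    have hsf : |s * f x| ≤ 1 := by
      rw [abs_mul]
      exact (mul_le_mul_of_nonneg_left (hM x) (abs_nonneg s)).trans hs
    have hsq : (s * f x) ^ 2 ≤ s ^ 2 * M ^ 2 := by
      rw [mul_pow, ← sq_abs (f x)]
      gcongr
      exact hM x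
    linarith [(abs_le.1 (abs_exp_sub_one_sub_id_le hsf)).2]
  have hexp_int : Integrable (fun x => exp (s * f x)) μ := by
    refine .of_bound (by fun_prop) (exp (|s| * M)) (ae_of_all _ fun x => ?_)
    rw [norm_of_nonneg (exp_pos _).le, exp_le_exp]
    exact (le_abs_self _).trans (by rw [abs_mul]; gcongr; exact hM x)
  have hquad_int : Integrable (fun x => 1 + s * f x + s ^ 2 * M ^ 2) μ :=
    ((integrable_const _).add (hfi.const_mul s)).add (integrable_const _)
  calc ∫ x, exp (s * f x) ∂μ ≤ ∫ x, (1 + s * f x + s ^ 2 * M ^ 2) ∂μ :=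
        integral_mono hexp_int hquad_int hpoint
    _ = s * ∫ x, f x ∂μ + s ^ 2 * M ^ 2 + 1 := by
        rw [integral_add (f := fun x => 1 + s * f x) ((integrable_const _).add (hfi.const_mul s))
            (integrable_const _),
          integral_add (integrable_const _) (hfi.const_mul s), integral_const_mul]
        simp only [integral_const, probReal_univ, smul_eq_mul, one_mul]
        ring
    _ ≤ exp (s * ∫ x, f x ∂μ + s ^ 2 * M ^ 2) := add_one_le_exp _

end Measure

section HopfLax

variable {X : Type*} [MetricSpace X] {p q t T s m : ℝ} {f : X → ℝ}

lemma hopfLaxP_of_ne_zero (ht : t ≠ 0) (f : X → ℝ) (x : X) :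
    hopfLaxP p f t x = ⨅ y, dist x y ^ p / (p * t ^ (p - 1)) + f y :=
  if_neg ht

@[simp]
lemma hopfLaxP_zero (p : ℝ) (f : X → ℝ) : hopfLaxP p f 0 = f :=
  funext fun _ => if_pos rfl

lemma bddBelow_range_hopfLax_s13 (hp : 0 ≤ p) (ht : 0 ≤ t) (hf : BddBelow (range f)) (x : X) :
    BddBelow (range fun y => dist x y ^ p / (p * t ^ (p - 1)) + f y) := by
  obtain ⟨L, hL⟩ := hf
  refine ⟨L, ?_⟩
  rintro _ ⟨y, rfl⟩
  exact le_add_of_nonneg_of_le (by positivity) (hL ⟨y, rfl⟩)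

lemma hopfLaxP_le (hp : 0 < p) (ht : 0 ≤ t) (hf : BddBelow (range f)) (x : X) :
    hopfLaxP p f t x ≤ f x := by
  rcases ht.eq_or_lt with rfl | ht
  · simp
  rw [hopfLaxP_of_ne_zero ht.ne']
  refine (ciInf_le (bddBelow_range_hopfLax_s13 hp.le ht.le hf x) x).trans_eq ?_
  simp [Real.zero_rpow hp.ne']

lemma Continuous.measurable_hopfLaxP [MeasurableSpace X] [OpensMeasurableSpace X]
    (hf : Continuous f) (hbdd : BddBelow (range f)) (hp : 0 ≤ p) (ht : 0 ≤ t) :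
    Measurable (hopfLaxP p f t) := by
  rcases ht.eq_or_lt with rfl | ht
  · simpa using hf.measurable
  rw [funext (hopfLaxP_of_ne_zero ht.ne' f)]
  refine (upperSemicontinuous_ciInf (bddBelow_range_hopfLax_s13 hp ht.le hbdd) fun y => ?_).measurable
  exact Continuous.upperSemicontinuous (by fun_prop (disch := exact Or.inr hp))

lemma hopfLaxP_const_mul (hpq : p.HolderConjugate q) (hT : 0 < T) (hs : 0 < s) (f : X → ℝ)
    (x : X) : hopfLaxP p (fun y => s * f y) (T * s ^ (1 - q)) x = s * hopfLaxP p f T x := by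
  have hTs : 0 < T * s ^ (1 - q) := by positivity
  rw [hopfLaxP_of_ne_zero hTs.ne', hopfLaxP_of_ne_zero hT.ne', Real.mul_iInf_of_nonneg hs.le]
  refine iInf_congr fun y => ?_
  have hexp : (1 - q) * (p - 1) = -1 := by linear_combination -hpq.sub_one_mul_conj
  have hrescale : (T * s ^ (1 - q)) ^ (p - 1) = T ^ (p - 1) * s⁻¹ := by
    rw [mul_rpow hT.le (by positivity), ← rpow_mul hs.le, hexp, Real.rpow_neg_one]
  have hp := hpq.pos
  rw [hrescale]
  field_simp

lemma eventually_lt_hopfLaxP (hp : 1 < p) (hf : BddBelow (range f)) {x : X}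
    (hfx : ContinuousAt f x) (hm : m < f x) : ∀ᶠ t in 𝓝[>] 0, m < hopfLaxP p f t x := by
  obtain ⟨L, hL⟩ := hf
  obtain ⟨m', hm, hm'⟩ := exists_between hm
  obtain ⟨δ, hδ, hnear⟩ := Metric.eventually_nhds_iff.1 (hfx.eventually (lt_mem_nhds hm'))
  have hfar : Tendsto (fun t : ℝ => δ ^ p / p * t ^ (1 - p)) (𝓝[>] 0) atTop :=
    (tendsto_rpow_neg_nhdsGT_zero (by linarith)).const_mul_atTop (by positivity)
  filter_upwards [hfar.eventually_ge_atTop (m' - L), self_mem_nhdsWithin] with t hbig ht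
  have ht : 0 < t := ht
  have : Nonempty X := ⟨x⟩
  rw [hopfLaxP_of_ne_zero ht.ne']
  refine hm.trans_le (le_ciInf fun y => ?_)
  by_cases hy : dist y x < δ
  · exact le_add_of_nonneg_of_le (by positivity) (hnear hy).le
  have hδy : δ ^ p ≤ dist x y ^ p :=
    rpow_le_rpow hδ.le (by rw [dist_comm]; exact not_lt.1 hy) (by linarith)
  have hsplit : δ ^ p / p * t ^ (1 - p) = δ ^ p / (p * t ^ (p - 1)) := by
    rw [show 1 - p = -(p - 1) by ring, rpow_neg ht.le]
    field_simp
  have hfar_y : δ ^ p / (p * t ^ (p - 1)) ≤ dist x y ^ p / (p * t ^ (p - 1)) := by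
    have hp0 : 0 < p := by linarith
    gcongr
  linarith [hL ⟨y, rfl⟩]

lemma exists_measure_lt_hopfLaxP_ne_zero [MeasurableSpace X] {μ : Measure X} (hp : 1 < p)
    (hf : Continuous f) (hbdd : BddBelow (range f)) (hm : μ {x | m < f x} ≠ 0) :
    ∃ T > 0, μ {x | m < hopfLaxP p f T x} ≠ 0 := by
  by_contra! hnull
  let T : ℕ → ℝ := fun n => ((n + 1 : ℕ) : ℝ)⁻¹
  have hT : Tendsto T atTop (𝓝[>] 0) := tendsto_inv_atTop_nhdsGT_zero.comp
    (tendsto_natCast_atTop_atTop.comp (tendsto_add_atTop_nat 1))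
  refine hm (measure_mono_null (fun x (hx : m < f x) => ?_)
    (measure_iUnion_null fun n => hnull (T n) (by positivity)))
  exact mem_iUnion.2 (hT.eventually (eventually_lt_hopfLaxP hp hbdd hf.continuousAt hx)).exists

end HopfLax

section Hypercontractivity

variable {X : Type*} [MetricSpace X] [MeasurableSpace X]

def HopfLaxHypercontractive (μ : Measure X) (p a ρ : ℝ) : Prop :=
  ∀ f : X → ℝ, Measurable f → (∃ M : ℝ, ∀ x, |f x| ≤ M) → ∀ t : ℝ, 0 ≤ t →
    (∫ x, exp ((a + ρ * t) * hopfLaxP p f t x) ∂μ) ^ (1 / (a + ρ * t)) ≤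
      (∫ x, exp (a * f x) ∂μ) ^ (1 / a)

variable [BorelSpace X] {μ : Measure X} [IsProbabilityMeasure μ] {p q a ρ M T m s : ℝ}
  {f : X → ℝ}

theorem HopfLaxHypercontractive.mul_add_log_div_le (hhc : HopfLaxHypercontractive μ p a ρ)
    (hpq : p.HolderConjugate q) (ha : 0 < a) (hρ : 0 ≤ ρ) (hf : Continuous f)
    (hM : ∀ x, |f x| ≤ M) (hT : 0 < T) (hA : μ {x | m < hopfLaxP p f T x} ≠ 0) (hs : 0 < s)
    (hsM : a * s * M ≤ 1) :
    s * m + log (μ.real {x | m < hopfLaxP p f T x}) / (a + ρ * (T * s ^ (1 - q))) ≤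
      s * ∫ x, f x ∂μ + a * s ^ 2 * M ^ 2 := by
  set c := a + ρ * (T * s ^ (1 - q))
  set α := μ.real {x | m < hopfLaxP p f T x}
  have hc : 0 < c := by positivity
  have hα : 0 < α := ENNReal.toReal_pos hA (measure_ne_top _ _)
  have hbdd : BddBelow (range f) := ⟨-M, by rintro _ ⟨x, rfl⟩; exact neg_le_of_abs_le (hM x)⟩
  have hgM (x : X) : hopfLaxP p f T x ≤ M :=
    (hopfLaxP_le hpq.pos hT.le hbdd x).trans (le_of_abs_le (hM x))
  have hg_int : Integrable (fun x => exp (c * s * hopfLaxP p f T x)) μ := by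
    have hg_meas := hf.measurable_hopfLaxP hbdd hpq.nonneg hT.le
    refine .of_bound (by fun_prop) (exp (c * s * M)) (ae_of_all _ fun x => ?_)
    rw [norm_of_nonneg (exp_pos _).le, exp_le_exp]
    gcongr
    exact hgM x
  have hmarkov : α * exp (c * s * m) ≤ ∫ x, exp (c * s * hopfLaxP p f T x) ∂μ :=
    measureReal_lt_mul_exp_le_integral_exp (by positivity) hg_int m
  have hhyper : (∫ x, exp (c * s * hopfLaxP p f T x) ∂μ) ^ (1 / c) ≤
      (∫ x, exp (a * s * f x) ∂μ) ^ (1 / a) := by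
    have hsf (x : X) : |s * f x| ≤ s * M := by
      rw [abs_mul, abs_of_pos hs]
      exact mul_le_mul_of_nonneg_left (hM x) hs.le
    simpa only [hopfLaxP_const_mul hpq hT hs, mul_assoc] using
      hhc (fun x => s * f x) (hf.measurable.const_mul s) ⟨s * M, hsf⟩ (T * s ^ (1 - q))
        (by positivity)
  have hmoment := integral_exp_mul_le (μ := μ) (s := a * s) hf.aestronglyMeasurable hM
    (by rwa [abs_of_pos (by positivity)])
  have key : (α * exp (c * s * m)) ^ (1 / c) ≤ exp (s * ∫ x, f x ∂μ + a * s ^ 2 * M ^ 2) :=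
    calc (α * exp (c * s * m)) ^ (1 / c)
        ≤ (∫ x, exp (c * s * hopfLaxP p f T x) ∂μ) ^ (1 / c) :=
          rpow_le_rpow (by positivity) hmarkov (by positivity)
      _ ≤ (∫ x, exp (a * s * f x) ∂μ) ^ (1 / a) := hhyper
      _ ≤ exp (a * s * ∫ x, f x ∂μ + (a * s) ^ 2 * M ^ 2) ^ (1 / a) :=
          rpow_le_rpow (integral_nonneg fun _ => (exp_pos _).le) hmoment (by positivity)
      _ = exp (s * ∫ x, f x ∂μ + a * s ^ 2 * M ^ 2) := by
        rw [← exp_mul]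
        congr 1
        field_simp
  have hlog := log_le_log (by positivity) key
  rw [log_rpow (by positivity), log_mul hα.ne' (exp_pos _).ne', log_exp, log_exp] at hlog
  calc s * m + log α / c = 1 / c * (log α + c * s * m) := by field_simp; ring
    _ ≤ _ := hlog

theorem HopfLaxHypercontractive.le_integral (hhc : HopfLaxHypercontractive μ p a ρ)
    (hpq : p.HolderConjugate q) (hq : 2 < q) (ha : 0 < a) (hρ : 0 < ρ) (hf : Continuous f)
    (hM : ∀ x, |f x| ≤ M) (hT : 0 < T) (hA : μ {x | m < hopfLaxP p f T x} ≠ 0) :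
    m ≤ ∫ x, f x ∂μ := by
  set α := μ.real {x | m < hopfLaxP p f T x}
  have hlogα : 0 ≤ -log α := neg_nonneg.2 (log_nonpos measureReal_nonneg measureReal_le_one)
  have hsmall : ∀ᶠ s in 𝓝[>] (0 : ℝ), a * s * M ≤ 1 := by
    have hlim : Tendsto (fun s : ℝ => a * s * M) (𝓝 0) (𝓝 0) := by
      simpa using (by fun_prop : Continuous fun s : ℝ => a * s * M).tendsto 0
    exact nhdsWithin_le_nhds (hlim.eventually (eventually_le_nhds one_pos))
  rw [← sub_nonpos]
  refine nonpos_of_eventually_le_mul_add_mul_rpow (A := a * M ^ 2) (B := -log α / (ρ * T))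
    (sub_pos.2 hq) ?_
  filter_upwards [hsmall, self_mem_nhdsWithin] with s hsM (hs : 0 < s)
  have hmain : s * m + log α / (a + ρ * (T * s ^ (1 - q))) ≤
      s * ∫ x, f x ∂μ + a * s ^ 2 * M ^ 2 :=
    hhc.mul_add_log_div_le hpq ha hρ.le hf hM hT hA hs hsM
  have hdecay : -log α / (a + ρ * (T * s ^ (1 - q))) ≤ -log α / (ρ * T) * (s * s ^ (q - 2)) :=
    calc _ ≤ -log α / (ρ * (T * s ^ (1 - q))) :=
          div_le_div_of_nonneg_left hlogα (by positivity) (le_add_of_nonneg_left ha.le)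
      _ = _ := by
          rw [← rpow_one_add' hs.le (by linarith), show 1 - q = -(1 + (q - 2)) by ring,
            rpow_neg hs.le]
          field_simp
  refine le_of_mul_le_mul_left ?_ hs
  calc s * (m - ∫ x, f x ∂μ)
      ≤ a * s ^ 2 * M ^ 2 + -log α / (a + ρ * (T * s ^ (1 - q))) := by rw [neg_div]; linarith
    _ ≤ a * s ^ 2 * M ^ 2 + -log α / (ρ * T) * (s * s ^ (q - 2)) := by gcongr
    _ = s * (a * M ^ 2 * s + -log α / (ρ * T) * s ^ (q - 2)) := by ring

end Hypercontractivity

theorem no_hypercontractivity_for_q_gt_two_general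
    {X : Type*} [MetricSpace X]
    [MeasurableSpace X] [BorelSpace X]
    (μ : Measure X) [IsProbabilityMeasure μ]
    (p q : ℝ) (hq : 2 < q) (hp : 1 < p) (hpq : 1 / p + 1 / q = 1)
    (a ρ : ℝ) (ha : 0 < a) (hρ : 0 < ρ)
    (hhc : ∀ f : X → ℝ, Measurable f → (∃ M : ℝ, ∀ x, |f x| ≤ M) → ∀ t : ℝ, 0 ≤ t →
      (∫ x, Real.exp ((a + ρ * t) * hopfLaxP p f t x) ∂μ) ^ (1 / (a + ρ * t)) ≤
        (∫ x, Real.exp (a * f x) ∂μ) ^ (1 / a)) :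
    ∀ f : X → ℝ, Continuous f → (∀ x, 0 ≤ f x) → (∃ M : ℝ, ∀ x, f x ≤ M) →
      essSup f μ ≤ ∫ x, f x ∂μ := by
  intro f hf hf0 ⟨M, hM⟩
  have hpq' : p.HolderConjugate q :=
    Real.holderConjugate_iff.2 ⟨hp, by simpa only [one_div] using hpq⟩
  have hfM (x : X) : |f x| ≤ M := abs_le.2 ⟨by linarith [hf0 x, hM x], hM x⟩
  have hbdd : BddBelow (range f) := ⟨0, by rintro _ ⟨x, rfl⟩; exact hf0 x⟩
  refine le_of_forall_lt_imp_le_of_dense fun m hm => ?_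
  obtain ⟨T, hT, hA⟩ := exists_measure_lt_hopfLaxP_ne_zero hp hf hbdd
    (measure_lt_ne_zero_of_lt_essSup (isCoboundedUnder_le_of_le _ hf0) hm)
  exact HopfLaxHypercontractive.le_integral hhc hpq' hq ha hρ hf hfM hT hA

/-- For `q > 2`, hypercontractivity of the Hopf–Lax semigroup forces the
essential supremum of every bounded continuous nonnegative function to be at
most its mean; in particular hypercontractivity fails whenever some such
function has essential supremum strictly larger than its μ-mean. -/
theorem no_hypercontractivity_for_q_gt_two
    {X : Type*} [MetricSpace X] [ProperSpace X] [Nonempty X]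
    [MeasurableSpace X] [BorelSpace X]
    (hgeo : ∀ x y : X, ∀ τ : ℝ, 0 ≤ τ → τ ≤ 1 →
      ∃ z : X, dist x z = τ * dist x y ∧ dist z y = (1 - τ) * dist x y)
    (μ : Measure X) [IsProbabilityMeasure μ]
    (p q : ℝ) (hq : 2 < q) (hp : 1 < p) (hpq : 1 / p + 1 / q = 1)
    (a ρ : ℝ) (ha : 0 < a) (hρ : 0 < ρ)
    (hhc : ∀ f : X → ℝ, Measurable f → (∃ M : ℝ, ∀ x, |f x| ≤ M) → ∀ t : ℝ, 0 ≤ t →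
      (∫ x, Real.exp ((a + ρ * t) * hopfLaxP p f t x) ∂μ) ^ (1 / (a + ρ * t)) ≤
        (∫ x, Real.exp (a * f x) ∂μ) ^ (1 / a)) :
    ∀ f : X → ℝ, Continuous f → (∀ x, 0 ≤ f x) → (∃ M : ℝ, ∀ x, f x ≤ M) →
      essSup f μ ≤ ∫ x, f x ∂μ :=
  no_hypercontractivity_for_q_gt_two_general μ p q hq hp hpq a ρ ha hρ hhc
end
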